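/- For x > 0 and real ν with 0 ≤ ν < 1/2, the function u ↦ e^{−2xu}(e^{2u} − 1)^{ν − 1/2} is integrable on (0, ∞), and ∫_0^∞ e^{−2xu}(e^{2u} − 1)^{ν − 1/2} du = Γ(ν + 1/2)Γ(x + 1/2 − ν)/(2Γ(x + 1)). -/

import Mathlib

open Real MeasureTheory

lemma real_beta {a b : ℝ} (ha : 0 < a) (hb : 0 < b) :
    IntegrableOn (fun t : ℝ => t ^ (a - 1) * (1 - t) ^ (b - 1)) (Set.Ioo 0 1) ∧
      (∫ t in Set.Ioo (0:ℝ) 1, t ^ (a - 1) * (1 - t) ^ (b - 1)) =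
        Real.Gamma a * Real.Gamma b / Real.Gamma (a + b) := by
  set fC : ℝ → ℂ := fun x => (x : ℂ) ^ ((a : ℂ) - 1) * (1 - (x : ℂ)) ^ ((b : ℂ) - 1) with hfC
  have hc : IntervalIntegrable fC volume 0 1 :=
    Complex.betaIntegral_convergent (by simpa using ha) (by simpa using hb)
  have hIoc : IntegrableOn fC (Set.Ioc 0 1) :=
    (intervalIntegrable_iff_integrableOn_Ioc_of_le (by norm_num)).mp hc
  have hIoo : IntegrableOn fC (Set.Ioo 0 1) := hIoc.mono_set Set.Ioo_subset_Ioc_self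
  have key : ∀ t ∈ Set.Ioo (0:ℝ) 1,
      fC t = ((t ^ (a - 1) * (1 - t) ^ (b - 1) : ℝ) : ℂ) := by
    intro t ht
    have h1 : ((t ^ (a - 1) : ℝ) : ℂ) = (t : ℂ) ^ ((a : ℂ) - 1) := by
      rw [Complex.ofReal_cpow ht.1.le]; push_cast; ring_nf
    have h2 : (((1 - t) ^ (b - 1) : ℝ) : ℂ) = (1 - (t : ℂ)) ^ ((b : ℂ) - 1) := by
      rw [Complex.ofReal_cpow (by linarith [ht.2] : (0:ℝ) ≤ 1 - t)]; push_cast; ring_nf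
    rw [hfC]; push_cast [← h1, ← h2]; ring
  have hint : IntegrableOn (fun t : ℝ => t ^ (a - 1) * (1 - t) ^ (b - 1)) (Set.Ioo 0 1) := by
    have h2 : IntegrableOn (fun t : ℝ => RCLike.re (fC t)) (Set.Ioo 0 1) := hIoo.re
    refine h2.congr_fun (fun t ht => ?_) measurableSet_Ioo
    beta_reduce; rw [key t ht]; simp
  refine ⟨hint, ?_⟩
  have hβ : Complex.Gamma a * Complex.Gamma b =
      Complex.Gamma ((a : ℂ) + b) * Complex.betaIntegral a b :=
    Complex.Gamma_mul_Gamma_eq_betaIntegral (by simpa using ha) (by simpa using hb)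
  have hval : Complex.betaIntegral a b =
      ((∫ t in Set.Ioo (0:ℝ) 1, t ^ (a - 1) * (1 - t) ^ (b - 1) : ℝ) : ℂ) := by
    rw [Complex.betaIntegral, intervalIntegral.integral_of_le (by norm_num : (0:ℝ) ≤ 1),
      MeasureTheory.integral_Ioc_eq_integral_Ioo,
      setIntegral_congr_fun measurableSet_Ioo key]
    exact integral_ofReal
  rw [hval] at hβ
  have hcast : ((Real.Gamma a * Real.Gamma b : ℝ) : ℂ) =
      ((Real.Gamma (a + b) * ∫ t in Set.Ioo (0:ℝ) 1, t ^ (a - 1) * (1 - t) ^ (b - 1) : ℝ) : ℂ) := by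
    rw [Complex.ofReal_mul, Complex.ofReal_mul, ← Complex.Gamma_ofReal, ← Complex.Gamma_ofReal,
      ← Complex.Gamma_ofReal, Complex.ofReal_add]
    exact hβ
  have hreal : Real.Gamma a * Real.Gamma b =
      Real.Gamma (a + b) * ∫ t in Set.Ioo (0:ℝ) 1, t ^ (a - 1) * (1 - t) ^ (b - 1) :=
    Complex.ofReal_injective hcast
  have hG : Real.Gamma (a + b) ≠ 0 := (Real.Gamma_pos_of_pos (by linarith)).ne'
  field_simp
  linarith [hreal]

theorem stmt15 (x ν : ℝ) (hx : 0 < x) (hν0 : 0 ≤ ν) (hν : ν < 1 / 2) :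
    IntegrableOn (fun u : ℝ => Real.exp (-2 * x * u) * (Real.exp (2 * u) - 1) ^ (ν - 1 / 2))
        (Set.Ioi 0) ∧
      (∫ u in Set.Ioi (0 : ℝ), Real.exp (-2 * x * u) * (Real.exp (2 * u) - 1) ^ (ν - 1 / 2)) =
        Real.Gamma (ν + 1 / 2) * Real.Gamma (x + 1 / 2 - ν) / (2 * Real.Gamma (x + 1)) := by
  set g : ℝ → ℝ := fun u => Real.exp (-2 * x * u) * (Real.exp (2 * u) - 1) ^ (ν - 1 / 2) with hg
  set f : ℝ → ℝ := fun t => -1 / 2 * Real.log t with hf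
  set f' : ℝ → ℝ := fun t => -1 / 2 * t⁻¹ with hf'
  have hA : (0:ℝ) < x + 1 / 2 - ν := by linarith
  have hB : (0:ℝ) < ν + 1 / 2 := by linarith
  have hderiv : ∀ t ∈ Set.Ioo (0:ℝ) 1, HasDerivWithinAt f (f' t) (Set.Ioo 0 1) t := by
    intro t ht
    exact ((Real.hasDerivAt_log ht.1.ne').const_mul (-1 / 2)).hasDerivWithinAt
  have hinj : Set.InjOn f (Set.Ioo 0 1) := by
    intro s hs t ht h
    have : Real.log s = Real.log t := by
      have := h
      simp only [hf] at this
      linarith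
    calc s = Real.exp (Real.log s) := (Real.exp_log hs.1).symm
      _ = Real.exp (Real.log t) := by rw [this]
      _ = t := Real.exp_log ht.1
  have himg : f '' Set.Ioo 0 1 = Set.Ioi 0 := by
    ext y
    constructor
    · rintro ⟨t, ht, rfl⟩
      have hlog : Real.log t < 0 := Real.log_neg ht.1 ht.2
      simp only [hf, Set.mem_Ioi]
      nlinarith
    · intro hy
      refine ⟨Real.exp (-2 * y), ⟨Real.exp_pos _, ?_⟩, ?_⟩
      · rw [Real.exp_lt_one_iff]
        simp only [Set.mem_Ioi] at hy
        linarith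
      · simp only [hf, Real.log_exp]
        ring
  have hpt : ∀ t ∈ Set.Ioo (0:ℝ) 1, |f' t| • g (f t) =
      1 / 2 * (t ^ (x + 1 / 2 - ν - 1) * (1 - t) ^ (ν + 1 / 2 - 1)) := by
    intro t ht
    have ht0 : (0:ℝ) < t := ht.1
    have ht1 : (0:ℝ) < 1 - t := by linarith [ht.2]
    have h0 : f' t = -1 / 2 * t⁻¹ := rfl
    have habs : |f' t| = 1 / 2 * t⁻¹ := by
      rw [h0, abs_of_nonpos (by nlinarith [inv_nonneg.mpr ht0.le] : -1 / 2 * t⁻¹ ≤ 0)]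
      ring
    have hft : f t = -1 / 2 * Real.log t := rfl
    have hgt : g (f t) = Real.exp (-2 * x * f t) * (Real.exp (2 * f t) - 1) ^ (ν - 1 / 2) := rfl
    have hexp1 : Real.exp (-2 * x * f t) = t ^ x := by
      rw [hft, Real.rpow_def_of_pos ht0]
      congr 1; ring
    have hexp2 : Real.exp (2 * f t) = t⁻¹ := by
      rw [hft, show 2 * (-1 / 2 * Real.log t) = -Real.log t by ring, Real.exp_neg,
        Real.exp_log ht0]
    rw [smul_eq_mul, habs, hgt, hexp1, hexp2]
    have hsub : t⁻¹ - 1 = (1 - t) * t⁻¹ := by field_simp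
    rw [hsub, Real.mul_rpow ht1.le (by positivity),
      Real.inv_rpow ht0.le, ← Real.rpow_neg ht0.le]
    rw [show t⁻¹ = t ^ (-1 : ℝ) by rw [Real.rpow_neg_one]]
    rw [show (1:ℝ) / 2 * t ^ (-1:ℝ) * (t ^ x * ((1 - t) ^ (ν - 1/2) * t ^ (-(ν - 1/2)))) =
      1 / 2 * ((t ^ x * t ^ (-(ν - 1/2)) * t ^ (-1:ℝ)) * (1 - t) ^ (ν - 1/2)) by ring,
      ← Real.rpow_add ht0, ← Real.rpow_add ht0]
    ring_nf
  obtain ⟨hbint, hbval⟩ := real_beta hA hB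
  have hiff := integrableOn_image_iff_integrableOn_abs_deriv_smul
    measurableSet_Ioo hderiv hinj g
  rw [himg] at hiff
  have hrint : IntegrableOn (fun t => |f' t| • g (f t)) (Set.Ioo 0 1) := by
    have hb2 : IntegrableOn
        (fun t : ℝ => 1 / 2 * (t ^ (x + 1 / 2 - ν - 1) * (1 - t) ^ (ν + 1 / 2 - 1)))
        (Set.Ioo 0 1) := hbint.const_mul (1 / 2)
    exact hb2.congr_fun (fun t ht => (hpt t ht).symm) measurableSet_Ioo
  refine ⟨hiff.mpr hrint, ?_⟩
  have heq := integral_image_eq_integral_abs_deriv_smul measurableSet_Ioo hderiv hinj g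
  rw [himg] at heq
  rw [heq, setIntegral_congr_fun measurableSet_Ioo hpt,
    MeasureTheory.integral_const_mul, hbval]
  rw [show x + 1/2 - ν + (ν + 1/2) = x + 1 by ring]
  ring
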